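/- Assume c ∈ (0,1) and C0 ≥ 1 are constants such that |K_{w'}(i)| ≤ C0·binom(n,w')·(1 − 2w'/n)^i for all integers 0 ≤ w' ≤ c·n and 0 ≤ i ≤ n/2. Let C be a linear binary code of length n whose dual code C⊥ has minimum distance d⊥ < n/2, and set t⊥ = ⌊(d⊥−1)/2⌋. Let w be an integer with 0 ≤ w ≤ c·n and let ε > 0. If ρ is a pmf on F_2^n satisfying d_TV(P_{C⊥} ∗ ρ, U_n) ≤ ε, then (1/binom(n,w))·Σ_{x : |x| = w} 2^n·ρ̂(x) ≤ |C⊥|·V_n(t⊥)/2^{n−1} + C0·n·(1 − 2w/n)^{t⊥} + 2ε. -/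

import Mathlib

open Finset Filter
open scoped Classical BigOperators Topology

abbrev BV (n : ℕ) := Fin n → ZMod 2

def wt {n : ℕ} (x : BV n) : ℕ := (Finset.univ.filter (fun i => x i ≠ 0)).card

def dotp {n : ℕ} (x y : BV n) : ZMod 2 := ∑ i, x i * y i

def IsPMF {α : Type*} [Fintype α] (P : α → ℝ) : Prop :=
  (∀ x, 0 ≤ P x) ∧ ∑ x, P x = 1

noncomputable def dTV {α : Type*} [Fintype α] (P Q : α → ℝ) : ℝ :=
  (1/2) * ∑ x, |P x - Q x|

noncomputable def unif (α : Type*) [Fintype α] : α → ℝ := fun _ => 1 / (Fintype.card α)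

noncomputable def unifOn {α : Type*} [Fintype α] (S : Set α) : α → ℝ :=
  fun x => if x ∈ S then 1 / (Nat.card S) else 0

noncomputable def conv {n : ℕ} (P Q : BV n → ℝ) : BV n → ℝ :=
  fun x => ∑ y, P y * Q (x - y)

noncomputable def FT {n : ℕ} (f : BV n → ℝ) : BV n → ℝ :=
  fun y => (1 / 2^n) * ∑ x, f x * (if dotp x y = 0 then (1:ℝ) else -1)

noncomputable def Kraw (n w i : ℕ) : ℝ :=
  ∑ j ∈ Finset.range (w+1), (-1:ℝ)^j * (Nat.choose i j) * (Nat.choose (n-i) (w-j))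

def Vball (n t : ℕ) : ℕ := ∑ j ∈ Finset.range (t+1), Nat.choose n j

noncomputable def pmfMap {m n : ℕ} (G : Matrix (Fin m) (Fin n) (ZMod 2)) (P : BV n → ℝ) :
    BV m → ℝ :=
  fun u => ∑ z ∈ Finset.univ.filter (fun z => G.mulVec z = u), P z

noncomputable def biasOf {n : ℕ} (e : BV n) (P : BV n → ℝ) : ℝ :=
  1/2 - ∑ z ∈ Finset.univ.filter (fun z => dotp e z = 1), P z

noncomputable def bitPMF {n : ℕ} (e : BV n) (P : BV n → ℝ) : ZMod 2 → ℝ :=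
  fun b => ∑ z ∈ Finset.univ.filter (fun z => dotp e z = b), P z

noncomputable def jointPMF {m n : ℕ} (G : Matrix (Fin m) (Fin n) (ZMod 2)) (e : BV n)
    (P : BV n → ℝ) : BV m × ZMod 2 → ℝ :=
  fun p => ∑ z ∈ Finset.univ.filter (fun z => G.mulVec z = p.1 ∧ dotp e z = p.2), P z

noncomputable def prodPMF {m : ℕ} (Pb : ZMod 2 → ℝ) : BV m × ZMod 2 → ℝ :=
  fun p => (1 / 2^m) * Pb p.2

def dualSet {n : ℕ} (C : Set (BV n)) : Set (BV n) := {y | ∀ c ∈ C, dotp y c = 0}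

def rowSpan {k n : ℕ} (G : Matrix (Fin k) (Fin n) (ZMod 2)) : Submodule (ZMod 2) (BV n) :=
  Submodule.span (ZMod 2) (Set.range (fun i => G i))

/-!
Write `∑_{|x| = w} 2ⁿ ρ̂(x) = ∑_z ρ(z) K_w(|z|)`. On the Hamming balls of radius `t` around `0`
and around the all-ones vector, bound `K_w(|z|)` by `binom(n, w)`: these balls carry little
`ρ`-mass, because `P_{C⊥} ∗ ρ` spreads a set `A` over `A + C⊥`, which has at most
`|C⊥| |A|` points, and is `ε`-close to uniform. Outside both balls `t < |z| < n - t`, and the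
assumed estimate on `K_w`, together with `K_w(n - i) = (-1)^w K_w(i)`, gives
`K_w(|z|) ≤ C0 binom(n, w) (1 - 2w/n)^t`.
-/

open scoped Pointwise

section

variable {n : ℕ}

noncomputable def chi (a : ZMod 2) : ℝ := if a = 0 then 1 else -1

lemma ZMod.two_eq_zero_or_eq_one (a : ZMod 2) : a = 0 ∨ a = 1 := by
  revert a; decide

lemma chi_add (a b : ZMod 2) : chi (a + b) = chi a * chi b := by
  rcases a.two_eq_zero_or_eq_one with rfl | rfl <;>
    rcases b.two_eq_zero_or_eq_one with rfl | rfl <;>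
    simp [chi, show (1 + 1 : ZMod 2) = 0 from rfl]

lemma chi_natCast (k : ℕ) : chi k = (-1) ^ k := by
  induction k with
  | zero => simp [chi]
  | succ k ih => rw [Nat.cast_succ, chi_add, ih, pow_succ]; simp [chi]

lemma abs_chi (a : ZMod 2) : |chi a| = 1 := by
  unfold chi; split_ifs <;> simp

def supp (x : BV n) : Finset (Fin n) := {i | x i ≠ 0}

lemma wt_eq_card_supp (x : BV n) : wt x = #(supp x) := rfl

def supportEquiv : BV n ≃ Finset (Fin n) where
  toFun := supp
  invFun S i := if i ∈ S then 1 else 0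
  left_inv x := by
    funext i
    rcases (x i).two_eq_zero_or_eq_one with h | h <;> simp [supp, h]
  right_inv S := by ext i; by_cases h : i ∈ S <;> simp [supp, h]

lemma dotp_eq_card_inter (x z : BV n) : dotp x z = (#(supp x ∩ supp z) : ZMod 2) := by
  have h : ∀ i, x i * z i = if i ∈ supp x ∩ supp z then 1 else 0 := by
    intro i
    rcases (x i).two_eq_zero_or_eq_one with hx | hx <;>
      rcases (z i).two_eq_zero_or_eq_one with hz | hz <;> simp [supp, hx, hz]
  simp only [dotp, h, sum_boole, filter_mem_eq_inter, univ_inter]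

lemma dotp_comm (x y : BV n) : dotp x y = dotp y x := by
  simp only [dotp, mul_comm]

lemma dotp_add_left (x y z : BV n) : dotp (x + y) z = dotp x z + dotp y z := by
  simp only [dotp, Pi.add_apply, add_mul, sum_add_distrib]

lemma dotp_one_left (x : BV n) : dotp 1 x = wt x := by
  simp [dotp_eq_card_inter, wt_eq_card_supp, supp]

lemma wt_add_one (z : BV n) : wt (z + 1) = n - wt z := by
  have h : supp (z + 1) = (supp z)ᶜ := by
    ext i
    rcases (z i).two_eq_zero_or_eq_one with hz | hz <;> simp [supp, hz]
    decide
  rw [wt_eq_card_supp, h, card_compl, Fintype.card_fin, wt_eq_card_supp]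

lemma wt_le (z : BV n) : wt z ≤ n :=
  hammingNorm_le_card_fintype.trans_eq (Fintype.card_fin n)

lemma card_filter_card_inter_eq {α : Type*} [Fintype α] [DecidableEq α] (Z : Finset α)
    {w j : ℕ} (hj : j ≤ w) :
    #{S ∈ powersetCard w (univ : Finset α) | #(S ∩ Z) = j}
      = (#Z).choose j * (Fintype.card α - #Z).choose (w - j) := by
  have union_inter {A B : Finset α} (hA : A ⊆ Z) (hB : B ⊆ Zᶜ) : (A ∪ B) ∩ Z = A := by
    grind [mem_compl]
  have union_sdiff {A B : Finset α} (hA : A ⊆ Z) (hB : B ⊆ Zᶜ) : (A ∪ B) \ Z = B := by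
    grind [mem_compl]
  calc #{S ∈ powersetCard w (univ : Finset α) | #(S ∩ Z) = j}
      = #(powersetCard j Z ×ˢ powersetCard (w - j) Zᶜ) := by
        refine card_nbij' (fun S => (S ∩ Z, S \ Z)) (fun p => p.1 ∪ p.2) ?_ ?_ ?_ ?_ <;>
          simp only [Set.MapsTo, Set.LeftInvOn, mem_coe, mem_filter, mem_product,
            mem_powersetCard, subset_univ, true_and, and_imp, Prod.forall]
        · intro S hS hSZ
          refine ⟨⟨inter_subset_right, hSZ⟩, fun a => by simp +contextual, ?_⟩
          rw [card_sdiff, inter_comm, hS, hSZ]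
        · intro A B hA hAc hB hBc
          have hAB : Disjoint A B := disjoint_of_subset_right hB (disjoint_of_subset_left hA
            disjoint_compl_right)
          rw [union_inter hA hB, card_union_of_disjoint hAB, hAc, hBc]
          omega
        · intro S _ _; rw [union_comm]; exact sdiff_union_inter S Z
        · intro A B hA _ hB _
          rw [union_inter hA hB, union_sdiff hA hB]
    _ = _ := by simp [card_powersetCard, card_compl]

lemma mem_shell_iff_supportEquiv_mem {w : ℕ} (x : BV n) :
    x ∈ ({x : BV n | wt x = w} : Finset (BV n)) ↔ supportEquiv x ∈ powersetCard w univ := by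
  simp only [mem_filter, mem_univ, true_and, mem_powersetCard, subset_univ]
  rfl

lemma sum_shell_eq_sum_powersetCard {w : ℕ} (f : Finset (Fin n) → ℝ) :
    ∑ x ∈ {x : BV n | wt x = w}, f (supp x) = ∑ S ∈ powersetCard w univ, f S :=
  sum_equiv supportEquiv mem_shell_iff_supportEquiv_mem fun _ _ => rfl

lemma card_shell {w : ℕ} : #{x : BV n | wt x = w} = n.choose w := by
  rw [card_equiv supportEquiv mem_shell_iff_supportEquiv_mem, card_powersetCard, card_univ,
    Fintype.card_fin]

theorem sum_chi_dotp_shell_eq_kraw {w : ℕ} (z : BV n) :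
    ∑ x ∈ {x : BV n | wt x = w}, chi (dotp x z) = Kraw n w (wt z) := by
  simp_rw [dotp_eq_card_inter, chi_natCast]
  rw [sum_shell_eq_sum_powersetCard (fun S => (-1 : ℝ) ^ #(S ∩ supp z)),
    ← sum_fiberwise_of_maps_to (g := fun S => #(S ∩ supp z)) (t := range (w + 1))]
  · refine sum_congr rfl fun j hj => ?_
    rw [sum_congr rfl fun S hS => by rw [(mem_filter.1 hS).2], sum_const,
      card_filter_card_inter_eq _ (Nat.lt_succ_iff.1 (mem_range.1 hj)), nsmul_eq_mul,
      Fintype.card_fin, ← wt_eq_card_supp]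
    push_cast
    ring
  · intro S hS
    rw [mem_powersetCard] at hS
    exact mem_range.2 (Nat.lt_succ_of_le (hS.2 ▸ card_le_card inter_subset_left))

lemma abs_kraw_wt_le_choose {w : ℕ} (z : BV n) : |Kraw n w (wt z)| ≤ n.choose w := by
  rw [← sum_chi_dotp_shell_eq_kraw]
  calc |∑ x ∈ {x : BV n | wt x = w}, chi (dotp x z)|
      ≤ ∑ x ∈ {x : BV n | wt x = w}, |chi (dotp x z)| := abs_sum_le_sum_abs _ _
    _ = n.choose w := by simp [abs_chi, card_shell]

lemma kraw_wt_add_one {w : ℕ} (z : BV n) :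
    Kraw n w (wt (z + 1)) = (-1) ^ w * Kraw n w (wt z) := by
  rw [← sum_chi_dotp_shell_eq_kraw, ← sum_chi_dotp_shell_eq_kraw, mul_sum]
  refine sum_congr rfl fun x hx => ?_
  rw [dotp_comm, dotp_add_left, chi_add, dotp_one_left, (mem_filter.1 hx).2, chi_natCast,
    dotp_comm, mul_comm]

lemma sum_shell_fourier_eq {w : ℕ} (ρ : BV n → ℝ) :
    ∑ x ∈ {x : BV n | wt x = w}, 2 ^ n * FT ρ x = ∑ z, ρ z * Kraw n w (wt z) := by
  simp_rw [FT, ← mul_assoc, mul_one_div_cancel (pow_ne_zero n (two_ne_zero' ℝ)), one_mul]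
  rw [sum_comm]
  refine sum_congr rfl fun z _ => ?_
  rw [← mul_sum, ← sum_chi_dotp_shell_eq_kraw]
  simp only [chi, dotp_comm]

lemma IsPMF.conv {P Q : BV n → ℝ} (hP : IsPMF P) (hQ : IsPMF Q) : IsPMF (conv P Q) := by
  refine ⟨fun x => sum_nonneg fun y _ => mul_nonneg (hP.1 y) (hQ.1 _), ?_⟩
  have hshift (y : BV n) : ∑ x, Q (x - y) = 1 :=
    (Fintype.sum_equiv (Equiv.subRight y) _ _ fun _ => rfl).trans hQ.2
  simp only [_root_.conv]
  rw [sum_comm]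
  simp only [← mul_sum, hshift, mul_one, hP.2]

lemma isPMF_unifOn {α : Type*} [Fintype α] {S : Set α} (hS : S.Nonempty) : IsPMF (unifOn S) := by
  have hcard : (Nat.card S : ℝ) ≠ 0 :=
    Nat.cast_ne_zero.2 (Nat.card_pos_iff.2 ⟨hS.to_subtype, inferInstance⟩).ne'
  refine ⟨fun x => by unfold unifOn; split_ifs <;> positivity, ?_⟩
  have hfilter : (#{x | x ∈ S} : ℝ) = Nat.card S := by
    rw [Nat.card_eq_card_toFinset, ← Set.filter_mem_univ_eq_toFinset]
  simp only [unifOn]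
  rw [← sum_filter, sum_const, nsmul_eq_mul, hfilter, mul_one_div_cancel hcard]

lemma isPMF_unif (α : Type*) [Fintype α] [Nonempty α] : IsPMF (unif α) := by
  refine ⟨fun x => by unfold unif; positivity, ?_⟩
  simp [unif, Fintype.card_ne_zero]

lemma sum_le_sum_add_dTV {α : Type*} [Fintype α] {P Q : α → ℝ} (h : ∑ x, P x = ∑ x, Q x)
    (A : Finset α) : ∑ z ∈ A, P z ≤ ∑ z ∈ A, Q z + dTV P Q := by
  have hzero : ∑ z ∈ A, (P z - Q z) + ∑ z ∈ Aᶜ, (P z - Q z) = 0 := by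
    rw [sum_add_sum_compl, sum_sub_distrib, h, sub_self]
  have hA : ∑ z ∈ A, (P z - Q z) ≤ ∑ z ∈ A, |P z - Q z| := sum_le_sum fun z _ => le_abs_self _
  have hAc : -∑ z ∈ Aᶜ, (P z - Q z) ≤ ∑ z ∈ Aᶜ, |P z - Q z| := by
    rw [← sum_neg_distrib]; exact sum_le_sum fun z _ => neg_le_abs _
  have hsplit := sum_add_sum_compl A fun z => |P z - Q z|
  rw [sum_sub_distrib] at hA hzero
  rw [dTV]
  linarith


lemma sum_le_sum_conv_unifOn_add {S : Set (BV n)} (hS : S.Nonempty) {ρ : BV n → ℝ}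
    (hρ : ∀ x, 0 ≤ ρ x) (A : Finset (BV n)) :
    ∑ z ∈ A, ρ z ≤ ∑ z ∈ A + S.toFinset, conv (unifOn S) ρ z := by
  have hshift (y : BV n) (hy : y ∈ S) : ∑ a ∈ A, ρ a ≤ ∑ z ∈ A + S.toFinset, ρ (z - y) := by
    calc ∑ a ∈ A, ρ a = ∑ z ∈ A.image (· + y), ρ (z - y) := by
          rw [sum_image fun a _ b _ h => add_right_cancel h]; simp
      _ ≤ _ := sum_le_sum_of_subset_of_nonneg
          (image_subset_iff.2 fun a ha => add_mem_add ha (Set.mem_toFinset.2 hy))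
          fun _ _ _ => hρ _
  calc ∑ a ∈ A, ρ a = ∑ y, unifOn S y * ∑ a ∈ A, ρ a := by
        rw [← sum_mul, (isPMF_unifOn hS).2, one_mul]
    _ ≤ ∑ y, unifOn S y * ∑ z ∈ A + S.toFinset, ρ (z - y) := by
        refine sum_le_sum fun y _ => ?_
        by_cases hy : y ∈ S
        · exact mul_le_mul_of_nonneg_left (hshift y hy) ((isPMF_unifOn hS).1 y)
        · simp [unifOn, hy]
    _ = ∑ z ∈ A + S.toFinset, conv (unifOn S) ρ z := by
        simp only [_root_.conv, mul_sum]
        exact sum_comm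

lemma sum_le_card_mul_card_div_add_dTV {S : Set (BV n)} (hS : S.Nonempty)
    {ρ : BV n → ℝ} (hρ : IsPMF ρ) (A : Finset (BV n)) :
    ∑ z ∈ A, ρ z ≤ Nat.card S * #A / 2 ^ n + dTV (conv (unifOn S) ρ) (unif (BV n)) := by
  have hunif : ∑ z ∈ A + S.toFinset, unif (BV n) z = #(A + S.toFinset) / 2 ^ n := by
    simp [unif, div_eq_mul_inv]
  have hcard : (#(A + S.toFinset) : ℝ) ≤ Nat.card S * #A := by
    rw [Nat.card_eq_card_toFinset, mul_comm]
    exact_mod_cast card_add_le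
  calc ∑ z ∈ A, ρ z ≤ ∑ z ∈ A + S.toFinset, conv (unifOn S) ρ z :=
        sum_le_sum_conv_unifOn_add hS hρ.1 A
    _ ≤ ∑ z ∈ A + S.toFinset, unif (BV n) z + dTV (conv (unifOn S) ρ) (unif (BV n)) :=
        sum_le_sum_add_dTV (((isPMF_unifOn hS).conv hρ).2.trans (isPMF_unif _).2.symm) _
    _ ≤ _ := by rw [hunif]; gcongr

def hammingBall (v : BV n) (t : ℕ) : Finset (BV n) := {z | wt (z - v) ≤ t}

lemma card_hammingBall (v : BV n) (t : ℕ) : #(hammingBall v t) = Vball n t := by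
  rw [card_equiv (Equiv.subRight v) (t := {z | wt z ≤ t}) (by simp [hammingBall]),
    card_eq_sum_card_fiberwise (f := wt) (t := range (t + 1))
      fun z hz => by simp at hz ⊢; omega]
  refine sum_congr rfl fun j hj => ?_
  rw [filter_filter, ← card_shell]
  congr 1
  ext z
  simp only [mem_filter, mem_univ, true_and, and_iff_right_iff_imp]
  rintro rfl
  exact Nat.lt_succ_iff.1 (mem_range.1 hj)

lemma one_sub_two_mul_div_nonneg {w : ℕ} {C0 : ℝ} (hC0 : 0 < C0) (hwn : w < n)
    (hK : (1 : ℝ) ≤ n / 2 → |Kraw n w 1| ≤ C0 * n.choose w * (1 - 2 * w / n) ^ 1) :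
    0 ≤ 1 - 2 * (w : ℝ) / n := by
  rcases (show n = 1 ∨ 2 ≤ n by omega) with rfl | hn
  · simp [show w = 0 by omega]
  · have hn' : (2 : ℝ) ≤ n := by exact_mod_cast hn
    have hK1 := (abs_nonneg _).trans (hK (by linarith))
    rw [pow_one] at hK1
    exact nonneg_of_mul_nonneg_right hK1 (mul_pos hC0 (by exact_mod_cast Nat.choose_pos hwn.le))

lemma kraw_wt_le_of_lt_of_lt {w t : ℕ} {C0 b : ℝ} (hC0 : 0 ≤ C0) (hb0 : 0 ≤ b) (hb1 : b ≤ 1)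
    (hK : ∀ i : ℕ, (i : ℝ) ≤ n / 2 → |Kraw n w i| ≤ C0 * n.choose w * b ^ i)
    {z : BV n} (hlow : t < wt z) (hhigh : wt z < n - t) :
    Kraw n w (wt z) ≤ C0 * n.choose w * b ^ t := by
  have hK_t (i : ℕ) (hti : t ≤ i) (hi : (i : ℝ) ≤ n / 2) :
      |Kraw n w i| ≤ C0 * n.choose w * b ^ t :=
    (hK i hi).trans (mul_le_mul_of_nonneg_left (pow_le_pow_of_le_one hb0 hb1 hti) (by positivity))
  refine (le_abs_self _).trans ?_
  by_cases hhalf : (wt z : ℝ) ≤ n / 2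
  · exact hK_t _ hlow.le hhalf
  · have hsymm : |Kraw n w (wt z)| = |Kraw n w (n - wt z)| := by
      rw [← wt_add_one, kraw_wt_add_one, abs_mul, abs_pow, abs_neg, abs_one, one_pow, one_mul]
    rw [hsymm]
    refine hK_t _ (by omega) ?_
    push_cast [wt_le z]
    linarith

lemma kraw_wt_le {w t : ℕ} {C0 b : ℝ} (hC0 : 0 ≤ C0) (hb0 : 0 ≤ b) (hb1 : b ≤ 1)
    (hK : ∀ i : ℕ, (i : ℝ) ≤ n / 2 → |Kraw n w i| ≤ C0 * n.choose w * b ^ i) (z : BV n) :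
    Kraw n w (wt z) ≤ n.choose w * ((if z ∈ hammingBall 0 t then 1 else 0)
      + (if z ∈ hammingBall 1 t then 1 else 0)) + C0 * n.choose w * b ^ t := by
  by_cases hmid : t < wt z ∧ wt z < n - t
  · have : (0 : ℝ) ≤ n.choose w * ((if z ∈ hammingBall 0 t then 1 else 0)
        + (if z ∈ hammingBall 1 t then 1 else 0)) := by positivity
    linarith [kraw_wt_le_of_lt_of_lt hC0 hb0 hb1 hK hmid.1 hmid.2]
  · have hball : z ∈ hammingBall 0 t ∨ z ∈ hammingBall 1 t := by
      simp only [hammingBall, mem_filter, mem_univ, true_and, ZModModule.sub_eq_add, add_zero,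
        wt_add_one]
      have := wt_le z
      omega
    have hone : (1 : ℝ) ≤ (if z ∈ hammingBall 0 t then 1 else 0)
        + (if z ∈ hammingBall 1 t then 1 else 0) := by
      rcases hball with h | h <;> simp only [h, if_true] <;> split_ifs <;> norm_num
    have hKz : Kraw n w (wt z) ≤ n.choose w := (le_abs_self _).trans (abs_kraw_wt_le_choose z)
    have : (0 : ℝ) ≤ C0 * n.choose w * b ^ t := by positivity
    nlinarith [(n.choose w).cast_nonneg (α := ℝ)]

lemma IsPMF.sum_mul_le {α : Type*} [Fintype α] [DecidableEq α] {ρ f : α → ℝ} (hρ : IsPMF ρ)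
    {A B : Finset α} {a c : ℝ}
    (hf : ∀ z, f z ≤ a * ((if z ∈ A then 1 else 0) + (if z ∈ B then 1 else 0)) + c) :
    ∑ z, ρ z * f z ≤ a * (∑ z ∈ A, ρ z + ∑ z ∈ B, ρ z) + c := by
  calc ∑ z, ρ z * f z
      ≤ ∑ z, ρ z * (a * ((if z ∈ A then 1 else 0) + (if z ∈ B then 1 else 0)) + c) :=
        sum_le_sum fun z _ => mul_le_mul_of_nonneg_left (hf z) (hρ.1 z)
    _ = a * (∑ z ∈ A, ρ z + ∑ z ∈ B, ρ z) + c := by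
        simp only [mul_add, sum_add_distrib, ← sum_mul, hρ.2, mul_ite, mul_one, mul_zero,
          sum_ite_mem, univ_inter, one_mul]
        ring

lemma zero_mem_dualSet (C : Set (BV n)) : 0 ∈ dualSet C := fun _ _ => by simp [dotp]

end

theorem dual_fourier_sum_bound_general (n : ℕ) (c C0 : ℝ)
    (hc : c ∈ Set.Ioo (0 : ℝ) 1) (hC0 : 1 ≤ C0)
    (hK : ∀ w i : ℕ, (w : ℝ) ≤ c * n → (i : ℝ) ≤ (n : ℝ) / 2 →
      |Kraw n w i| ≤ C0 * (n.choose w : ℝ) * (1 - 2 * w / n) ^ i)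
    (C : Submodule (ZMod 2) (BV n)) (dperp : ℕ)
    (hdn : (dperp : ℝ) < (n : ℝ) / 2)
    (w : ℕ) (hw : (w : ℝ) ≤ c * n) (ε : ℝ)
    (ρ : BV n → ℝ) (hρ : IsPMF ρ)
    (ht : dTV (conv (unifOn (dualSet (C : Set (BV n)))) ρ) (unif (BV n)) ≤ ε) :
    (1 / (n.choose w : ℝ)) * ∑ x ∈ Finset.univ.filter (fun x : BV n => wt x = w), 2 ^ n * FT ρ x
      ≤ (Nat.card (dualSet (C : Set (BV n))) : ℝ) * (Vball n ((dperp - 1) / 2) : ℝ) / 2 ^ (n - 1)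
        + C0 * n * (1 - 2 * w / n) ^ ((dperp - 1) / 2) + 2 * ε := by
  set D := dualSet (C : Set (BV n))
  set t := (dperp - 1) / 2
  set b : ℝ := 1 - 2 * w / n
  have hn : 0 < n := by exact_mod_cast (show (0 : ℝ) < n by linarith [dperp.cast_nonneg' (α := ℝ)])
  have hwn : w < n := by exact_mod_cast hw.trans_lt (mul_lt_of_lt_one_left (by positivity) hc.2)
  have hchoose : (0 : ℝ) < n.choose w := by exact_mod_cast Nat.choose_pos hwn.le
  have hb0 : 0 ≤ b := one_sub_two_mul_div_nonneg (by linarith) hwn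
    fun h => hK w 1 hw (by exact_mod_cast h)
  have hb1 : b ≤ 1 := by simp only [b]; linarith [show 0 ≤ 2 * (w : ℝ) / n by positivity]
  have hmass (v : BV n) : ∑ z ∈ hammingBall v t, ρ z ≤ Nat.card D * Vball n t / 2 ^ n + ε := by
    have := sum_le_card_mul_card_div_add_dTV ⟨0, zero_mem_dualSet (C : Set (BV n))⟩ hρ
      (hammingBall v t)
    rw [card_hammingBall] at this
    linarith
  rw [sum_shell_fourier_eq]
  calc 1 / (n.choose w : ℝ) * ∑ z, ρ z * Kraw n w (wt z)
      ≤ 1 / (n.choose w : ℝ) * (n.choose w * (∑ z ∈ hammingBall 0 t, ρ z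
          + ∑ z ∈ hammingBall 1 t, ρ z) + C0 * n.choose w * b ^ t) := by
        have hK' := kraw_wt_le (t := t) (b := b) (by linarith) hb0 hb1 fun i hi => hK w i hw hi
        gcongr
        exact hρ.sum_mul_le hK'
    _ = ∑ z ∈ hammingBall 0 t, ρ z + ∑ z ∈ hammingBall 1 t, ρ z + C0 * b ^ t := by
        field_simp
    _ ≤ 2 * (Nat.card D * Vball n t / 2 ^ n + ε) + C0 * b ^ t := by
        linarith [hmass 0, hmass 1]
    _ ≤ _ := by
        have hhalf : 2 * (Nat.card D * Vball n t / 2 ^ n : ℝ)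
            = Nat.card D * Vball n t / 2 ^ (n - 1) := by
          rw [show (2 : ℝ) ^ n = 2 * 2 ^ (n - 1) by rw [← pow_succ']; congr; omega]
          field_simp
        have hC0n : C0 * b ^ t ≤ C0 * n * b ^ t := by
          gcongr
          exact le_mul_of_one_le_right (by linarith) (by exact_mod_cast hn)
        linarith

theorem dual_fourier_sum_bound (n : ℕ) (c C0 : ℝ)
    (hc : c ∈ Set.Ioo (0 : ℝ) 1) (hC0 : 1 ≤ C0)
    (hK : ∀ w i : ℕ, (w : ℝ) ≤ c * n → (i : ℝ) ≤ (n : ℝ) / 2 →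
      |Kraw n w i| ≤ C0 * (n.choose w : ℝ) * (1 - 2 * w / n) ^ i)
    (C : Submodule (ZMod 2) (BV n)) (dperp : ℕ)
    (hdperp : IsLeast {m : ℕ | ∃ y ∈ dualSet (C : Set (BV n)), y ≠ 0 ∧ wt y = m} dperp)
    (hdn : (dperp : ℝ) < (n : ℝ) / 2)
    (w : ℕ) (hw : (w : ℝ) ≤ c * n) (ε : ℝ) (hε : 0 < ε)
    (ρ : BV n → ℝ) (hρ : IsPMF ρ)
    (ht : dTV (conv (unifOn (dualSet (C : Set (BV n)))) ρ) (unif (BV n)) ≤ ε) :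
    (1 / (n.choose w : ℝ)) * ∑ x ∈ Finset.univ.filter (fun x : BV n => wt x = w), 2 ^ n * FT ρ x
      ≤ (Nat.card (dualSet (C : Set (BV n))) : ℝ) * (Vball n ((dperp - 1) / 2) : ℝ) / 2 ^ (n - 1)
        + C0 * n * (1 - 2 * w / n) ^ ((dperp - 1) / 2) + 2 * ε :=
  dual_fourier_sum_bound_general n c C0 hc hC0 hK C dperp hdn w hw ε ρ hρ ht
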